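/- For any ordering of the three pairs {i,j}, {j,k}, {k,i} (i, j, k distinct) as a subsequence of an RCMSN, the first pair in the ordering can reach the sensor it does not contain, and the second pair can reach the sensor it does not contain; hence every 3-element subset of sensors contributes at least 2 deliveries beyond the trivial ones. -/

import Mathlib

/-!
Any two of the three pairs `{i,j}, {j,k}, {k,i}` meet, and any two distinct ones together cover
`{i,j,k}`. Since `i, j, k` are distinct, so are the three pairs, hence so are the packets at
`p < q < r`. A packet therefore reaches, in one step, the sensor it misses through any later
packet of the triple.
-/

def canReach {n m : ℕ} (a : Fin m → Finset (Fin n)) (k : Fin m) (x : Fin n) : Prop :=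
  ∃ k' : Fin m,
    Relation.ReflTransGen (fun i j : Fin m => i < j ∧ (a i ∩ a j).Nonempty) k k' ∧ x ∈ a k'

theorem canReach_of_lt {n m : ℕ} {a : Fin m → Finset (Fin n)} {k k' : Fin m} {x : Fin n}
    (hlt : k < k') (hmeet : (a k ∩ a k').Nonempty) (hx : x ∈ a k') : canReach a k x :=
  ⟨k', .single ⟨hlt, hmeet⟩, hx⟩

theorem Set.ne_and_ne_of_ncard_eq_three {β : Type*} {x y z : β}
    (h : ({x, y, z} : Set β).ncard = 3) : x ≠ y ∧ y ≠ z := by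
  have hpair (u v : β) : ({u, v} : Set β).ncard ≤ 2 :=
    (Set.ncard_insert_le u {v}).trans (by simp)
  constructor <;> rintro rfl
  · rw [Set.insert_idem] at h
    linarith [hpair x z]
  · rw [Set.pair_eq_singleton] at h
    linarith [hpair x y]

namespace Triangle

variable {α : Type*} [DecidableEq α] {i j k : α}

abbrev sides (i j k : α) : Set (Finset α) := {{i, j}, {j, k}, {k, i}}

theorem inter_nonempty {S T : Finset α} (hS : S ∈ sides i j k) (hT : T ∈ sides i j k) :
    (S ∩ T).Nonempty := by
  simp only [Set.mem_insert_iff, Set.mem_singleton_iff] at hS hT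
  rcases hS with rfl | rfl | rfl <;> rcases hT with rfl | rfl | rfl <;> simp [Finset.Nonempty]

theorem union_eq {S T : Finset α} (hS : S ∈ sides i j k) (hT : T ∈ sides i j k) (hST : S ≠ T) :
    S ∪ T = {i, j, k} := by
  simp only [Set.mem_insert_iff, Set.mem_singleton_iff] at hS hT
  rcases hS with rfl | rfl | rfl <;> rcases hT with rfl | rfl | rfl <;>
    first
      | exact absurd rfl hST
      | ext x
        simp only [Finset.mem_union, Finset.mem_insert, Finset.mem_singleton]
        tauto

theorem ncard_sides (hij : i ≠ j) (hjk : j ≠ k) (hik : i ≠ k) : (sides i j k).ncard = 3 := by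
  refine Set.ncard_eq_three.mpr ⟨_, _, _, ?_, ?_, ?_, rfl⟩
  · exact ne_of_mem_of_not_mem' (a := i) (by simp) (by simp [hij, hik])
  · exact ne_of_mem_of_not_mem' (a := j) (by simp) (by simp [hij.symm, hjk])
  · exact ne_of_mem_of_not_mem' (a := j) (by simp) (by simp [hij.symm, hjk])

theorem canReach_of_sides {n m : ℕ} {a : Fin m → Finset (Fin n)} {i j k : Fin n} {s t : Fin m}
    (hst : s < t) (hs : a s ∈ sides i j k) (ht : a t ∈ sides i j k) (hne : a s ≠ a t)
    {x : Fin n} (hx : x ∈ ({i, j, k} : Finset (Fin n))) (hxs : x ∉ a s) : canReach a s x := by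
  refine canReach_of_lt hst (inter_nonempty hs ht) ?_
  rw [← union_eq hs ht hne] at hx
  exact (Finset.mem_union.mp hx).resolve_left hxs

end Triangle

open Triangle in
/-- For any ordering of the three pairs `{i,j}, {j,k}, {k,i}` (with `i,j,k` distinct)
appearing at positions `p < q < r` of an RCMSN, the first pair can reach the sensor
it does not contain, and so can the second pair. -/
theorem stmt_2 (n m : ℕ) (a : Fin m → Finset (Fin n))
    (i j k : Fin n) (hij : i ≠ j) (hjk : j ≠ k) (hik : i ≠ k)
    (p q r : Fin m) (hpq : p < q) (hqr : q < r)
    (hset : ({a p, a q, a r} : Set (Finset (Fin n))) =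
      {({i, j} : Finset (Fin n)), {j, k}, {k, i}}) :
    (∀ x ∈ ({i, j, k} : Finset (Fin n)), x ∉ a p → canReach a p x) ∧
    (∀ x ∈ ({i, j, k} : Finset (Fin n)), x ∉ a q → canReach a q x) := by
  replace hset : ({a p, a q, a r} : Set (Finset (Fin n))) = sides i j k := hset
  have mem_sides {s} (hs : a s ∈ ({a p, a q, a r} : Set (Finset (Fin n)))) :
      a s ∈ sides i j k := hset ▸ hs
  obtain ⟨hne_pq, hne_qr⟩ :=
    Set.ne_and_ne_of_ncard_eq_three (hset ▸ ncard_sides hij hjk hik)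
  exact ⟨fun x hx => canReach_of_sides hpq (mem_sides (by simp)) (mem_sides (by simp)) hne_pq hx,
    fun x hx => canReach_of_sides hqr (mem_sides (by simp)) (mem_sides (by simp)) hne_qr hx⟩
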